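/- arXiv:1103.0748 — 5 statements merged into one kernel-verified Lean document; each statement's English description precedes it below -/
import Mathlib

section
/- Let X be an infinite-dimensional Banach space and F a finite-dimensional subspace of X. Then there exists a vector p with ‖p‖ = 1 and dist(p, F) = 1. -/
/-!
A finite-dimensional subspace `F` is proximinal: `y ↦ ‖x - y‖` is continuous and coercive on the
proper space `F`, so every `x` has a nearest point `y ∈ F`. If `x ∉ F`, rescaling `x - y` to norm
one gives a unit vector whose distance to `F` is still its norm, because the distance to `F` is
the quotient norm on `E ⧸ F`, which is homogeneous and ignores translations by `F`.
-/

open Metric Filter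

section

variable {𝕜 E : Type*} [NontriviallyNormedField 𝕜] [NormedAddCommGroup E] [NormedSpace 𝕜 E]

theorem Submodule.Quotient.norm_mk_eq_infDist (F : Submodule 𝕜 E) (x : E) :
    ‖(Submodule.Quotient.mk x : E ⧸ F)‖ = infDist x F :=
  QuotientAddGroup.norm_mk x

theorem Submodule.infDist_smul_sub {F : Submodule 𝕜 E} (c : 𝕜) (x : E) {y : E} (hy : y ∈ F) :
    infDist (c • (x - y)) F = ‖c‖ * infDist x F := by
  simp only [← Submodule.Quotient.norm_mk_eq_infDist, Submodule.Quotient.mk_smul,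
    Submodule.Quotient.mk_sub, (Submodule.Quotient.mk_eq_zero F).2 hy, sub_zero, norm_smul]

theorem Submodule.exists_infDist_eq_dist [ProperSpace 𝕜] (F : Submodule 𝕜 E)
    [FiniteDimensional 𝕜 F] (x : E) : ∃ y ∈ F, infDist x F = dist x y := by
  have : ProperSpace F := FiniteDimensional.proper 𝕜 F
  have hcoercive : Tendsto (fun y : F ↦ dist x y) (cocompact F) atTop := by
    refine tendsto_atTop_mono (fun y ↦ ?_)
      (tendsto_atTop_add_const_right _ (-‖x‖) tendsto_norm_cocompact_atTop)
    rw [dist_comm, dist_eq_norm, Submodule.coe_norm]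
    linarith [norm_sub_norm_le (y : E) x]
  obtain ⟨y, hy⟩ := (continuous_const.dist continuous_subtype_val).exists_forall_le hcoercive
  refine ⟨y, y.2, le_antisymm (infDist_le_dist_of_mem y.2) ?_⟩
  exact (le_infDist ⟨0, F.zero_mem⟩).2 fun z hz ↦ hy ⟨z, hz⟩

end

theorem Submodule.exists_norm_eq_one_infDist_eq_one {𝕜 E : Type*} [RCLike 𝕜]
    [NormedAddCommGroup E] [NormedSpace 𝕜 E] (F : Submodule 𝕜 E) [FiniteDimensional 𝕜 F]
    (hF : F ≠ ⊤) : ∃ p : E, ‖p‖ = 1 ∧ infDist p F = 1 := by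
  obtain ⟨x, hx⟩ := SetLike.exists_not_mem_of_ne_top F hF
  obtain ⟨y, hyF, hxy⟩ := F.exists_infDist_eq_dist x
  have hpos : 0 < dist x y :=
    hxy ▸ (F.closed_of_finiteDimensional.notMem_iff_infDist_pos ⟨0, F.zero_mem⟩).1 hx
  have hscale : ‖((dist x y)⁻¹ : 𝕜)‖ * dist x y = 1 := by
    rw [norm_inv, RCLike.norm_ofReal, abs_of_pos hpos, inv_mul_cancel₀ hpos.ne']
  refine ⟨((dist x y)⁻¹ : 𝕜) • (x - y), ?_, ?_⟩
  · rwa [norm_smul, ← dist_eq_norm]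
  · rwa [F.infDist_smul_sub _ _ hyF, hxy]

theorem exists_unit_vector_dist_one_from_finite_dim_subspace_general
    (X : Type*) [NormedAddCommGroup X] [NormedSpace ℝ X]
    (hX : ¬ FiniteDimensional ℝ X)
    (F : Submodule ℝ X) (hF : FiniteDimensional ℝ F) :
    ∃ p : X, ‖p‖ = 1 ∧ Metric.infDist p (F : Set X) = 1 := by
  refine F.exists_norm_eq_one_infDist_eq_one fun hFtop ↦ hX ?_
  subst hFtop
  exact Submodule.topEquiv.finiteDimensional

theorem exists_unit_vector_dist_one_from_finite_dim_subspace
    (X : Type*) [NormedAddCommGroup X] [NormedSpace ℝ X] [CompleteSpace X]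
    (hX : ¬ FiniteDimensional ℝ X)
    (F : Submodule ℝ X) (hF : FiniteDimensional ℝ F) :
    ∃ p : X, ‖p‖ = 1 ∧ Metric.infDist p (F : Set X) = 1 :=
  exists_unit_vector_dist_one_from_finite_dim_subspace_general X hX F hF
end

section
/- Let s: N_i → X satisfy ‖u − v‖ ≤ ‖s(u) − s(v)‖ ≤ 2‖u − v‖ for all u, v ∈ N_i and s(0) = 0, for two maps s_i, s_{i+1}. Define φ(a) = ((2^i − ‖a‖)/2^{i−1}) s_i(a) + ((‖a‖ − 2^{i−1})/2^{i−1}) s_{i+1}(a) for 2^{i−1} ≤ ‖a‖ ≤ 2^i. Then for a, b with 2^{i−1} ≤ ‖b‖ ≤ ‖a‖ ≤ 2^i: ‖φ(a) − φ(b)‖ ≤ 2‖a − b‖ + 8|‖a‖ − ‖b‖| ≤ 10‖a − b‖. -/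
/-!
With `t = (‖a‖ - 2^(i-1)) / 2^(i-1)`, `φ(a)` is the convex combination `(1 - t) s_i(a) + t s_{i+1}(a)`.
Hence `φ(a) - φ(b)` is a convex combination of `s_i(a) - s_i(b)` and `s_{i+1}(a) - s_{i+1}(b)`,
of norm at most `2‖a - b‖`, plus `(t_a - t_b) (s_{i+1}(b) - s_i(b))`.  Here
`|t_a - t_b| = |‖a‖ - ‖b‖| / 2^(i-1)`, and `‖s_{i+1}(b) - s_i(b)‖ ≤ 4‖b‖ ≤ 8 · 2^(i-1)` because both maps
fix `0`.
-/

open NNReal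

theorem LipschitzWith.norm_convexCombo_sub_convexCombo_le {P X : Type*} [PseudoMetricSpace P]
    [SeminormedAddCommGroup X] [NormedSpace ℝ X] {f g : P → X} {K : ℝ≥0}
    (hf : LipschitzWith K f) (hg : LipschitzWith K g) {t : ℝ} (ht₀ : 0 ≤ t) (ht₁ : t ≤ 1)
    (s : ℝ) (a b : P) :
    ‖((1 - t) • f a + t • g a) - ((1 - s) • f b + s • g b)‖
      ≤ K * dist a b + |t - s| * ‖g b - f b‖ := by
  have split : ((1 - t) • f a + t • g a) - ((1 - s) • f b + s • g b)
      = ((1 - t) • (f a - f b) + t • (g a - g b)) + (t - s) • (g b - f b) := by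
    module
  have hfab : ‖f a - f b‖ ≤ K * dist a b := by rw [← dist_eq_norm]; exact hf.dist_le_mul a b
  have hgab : ‖g a - g b‖ ≤ K * dist a b := by rw [← dist_eq_norm]; exact hg.dist_le_mul a b
  have ht₁' : 0 ≤ 1 - t := by linarith
  calc ‖((1 - t) • f a + t • g a) - ((1 - s) • f b + s • g b)‖
      ≤ (1 - t) * ‖f a - f b‖ + t * ‖g a - g b‖ + |t - s| * ‖g b - f b‖ := by
        rw [split, ← norm_smul_of_nonneg ht₁', ← norm_smul_of_nonneg ht₀, ← Real.norm_eq_abs,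
          ← norm_smul]
        exact (norm_add_le _ _).trans (add_le_add_left (norm_add_le _ _) _)
    _ ≤ (1 - t) * (K * dist a b) + t * (K * dist a b) + |t - s| * ‖g b - f b‖ := by
        gcongr
    _ = K * dist a b + |t - s| * ‖g b - f b‖ := by ring

theorem case_one_upper_estimate
    {E X : Type*} [NormedAddCommGroup E] [NormedSpace ℝ E]
    [NormedAddCommGroup X] [NormedSpace ℝ X]
    (i : ℤ) (si si1 : E → X)
    (hsi : ∀ u v : E, ‖u - v‖ ≤ ‖si u - si v‖ ∧ ‖si u - si v‖ ≤ 2 * ‖u - v‖)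
    (hsi1 : ∀ u v : E, ‖u - v‖ ≤ ‖si1 u - si1 v‖ ∧ ‖si1 u - si1 v‖ ≤ 2 * ‖u - v‖)
    (hsi0 : si 0 = 0) (hsi10 : si1 0 = 0)
    (a b : E) (hb1 : (2:ℝ)^(i-1) ≤ ‖b‖) (hba : ‖b‖ ≤ ‖a‖) (ha : ‖a‖ ≤ (2:ℝ)^i) :
    ‖((((2:ℝ)^i - ‖a‖)/(2:ℝ)^(i-1)) • si a + ((‖a‖ - (2:ℝ)^(i-1))/(2:ℝ)^(i-1)) • si1 a)
      - ((((2:ℝ)^i - ‖b‖)/(2:ℝ)^(i-1)) • si b + ((‖b‖ - (2:ℝ)^(i-1))/(2:ℝ)^(i-1)) • si1 b)‖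
      ≤ 2 * ‖a - b‖ + 8 * |‖a‖ - ‖b‖| ∧
    2 * ‖a - b‖ + 8 * |‖a‖ - ‖b‖| ≤ 10 * ‖a - b‖ := by
  set d : ℝ := (2:ℝ)^(i-1)
  have hd : 0 < d := by positivity
  have h2i : (2:ℝ)^i = 2 * d := by
    rw [← zpow_one_add₀ two_ne_zero]; ring_nf
  have hf : LipschitzWith 2 si := lipschitzWith_iff_norm_sub_le.2 fun u v => (hsi u v).2
  have hg : LipschitzWith 2 si1 := lipschitzWith_iff_norm_sub_le.2 fun u v => (hsi1 u v).2
  have hgfb : ‖si1 b - si b‖ ≤ 8 * d := by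
    have := norm_sub_le_of_le (hg.norm_le_mul hsi10 b) (hf.norm_le_mul hsi0 b)
    push_cast at this
    linarith
  have hweight (x : ℝ) : ((2:ℝ)^i - x) / d = 1 - (x - d) / d := by
    rw [h2i]; field_simp; ring
  have hdiff : (‖a‖ - d) / d - (‖b‖ - d) / d = (‖a‖ - ‖b‖) / d := by ring
  have hab := abs_norm_sub_norm_le a b
  have key := hf.norm_convexCombo_sub_convexCombo_le hg (t := (‖a‖ - d) / d)
    (div_nonneg (by linarith) hd.le) (by rw [div_le_one hd]; linarith) ((‖b‖ - d) / d) a b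
  rw [hweight, hweight]
  refine ⟨key.trans ?_, by linarith [abs_nonneg (‖a‖ - ‖b‖)]⟩
  rw [dist_eq_norm, hdiff, abs_div, abs_of_pos hd]
  calc (2:ℝ≥0) * ‖a - b‖ + |‖a‖ - ‖b‖| / d * ‖si1 b - si b‖
      ≤ 2 * ‖a - b‖ + |‖a‖ - ‖b‖| / d * (8 * d) := by push_cast; gcongr
    _ = 2 * ‖a - b‖ + 8 * |‖a‖ - ‖b‖| := by field_simp
end

section
/- Case 2 lower estimate: let 2^{i−1} ≤ ‖b‖ ≤ 2^i ≤ ‖a‖ ≤ 2^{i+1}, with maps s_j satisfying ‖u−v‖ ≤ ‖s_j(u)−s_j(v)‖ ≤ 2‖u−v‖ and ‖s_j(u)‖ ≤ 2‖u‖, and φ the interpolated map. Then ‖φ(a) − φ(b)‖ ≥ ‖a − b‖ − 12(‖a‖ − ‖b‖). -/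
/-!
Both interpolations are perturbations of the common middle map: with `c = 2^i`,
`φ(a) = s_{i+1}(a) + ((‖a‖ - c)/c) • (s_{i+2}(a) - s_{i+1}(a))` and
`φ(b) = s_{i+1}(b) + ((c - ‖b‖)/(c/2)) • (s_i(b) - s_{i+1}(b))`.
Since `‖s_j(u)‖ ≤ 2‖u‖` and `‖u‖` is at most twice the lower end of its shell, the two corrections
have norm at most `8(‖a‖ - c)` and `8(c - ‖b‖)`, so `‖φ(a) - φ(b)‖ ≥ ‖a - b‖ - 8(‖a‖ - ‖b‖)`.
-/

theorem smul_add_smul_eq_add_smul_sub_left {R M : Type*} [CommRing R] [AddCommGroup M]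
    [Module R M] {p q : R} (h : p + q = 1) (x y : M) :
    p • x + q • y = x + q • (y - x) := by
  rw [eq_sub_of_add_eq h]
  module

theorem smul_add_smul_eq_add_smul_sub_right {R M : Type*} [CommRing R] [AddCommGroup M]
    [Module R M] {p q : R} (h : p + q = 1) (x y : M) :
    p • x + q • y = y + p • (x - y) := by
  rw [eq_sub_of_add_eq' h]
  module

theorem shell_weights_add_eq_one {K : Type*} [Field K] {c C : K} (hc : c ≠ 0)
    (hC : C = 2 * c) (r : K) :
    (C - r) / c + (r - c) / c = 1 := by
  subst hC
  field_simp
  ring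

theorem norm_div_smul_sub_le {X : Type*} [SeminormedAddCommGroup X] [NormedSpace ℝ X]
    {c d r : ℝ} {x y : X} (hc : 0 < c) (hd : 0 ≤ d) (hr : r ≤ 2 * c)
    (hx : ‖x‖ ≤ 2 * r) (hy : ‖y‖ ≤ 2 * r) :
    ‖(d / c) • (x - y)‖ ≤ 8 * d := by
  have hxy : ‖x - y‖ ≤ 8 * c := by linarith [norm_sub_le x y]
  calc ‖(d / c) • (x - y)‖ = d / c * ‖x - y‖ := by
        rw [norm_smul, Real.norm_of_nonneg (by positivity)]
    _ ≤ d / c * (8 * c) := by gcongr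
    _ = 8 * d := by field_simp

theorem norm_sub_sub_le_norm_add_sub_add {X : Type*} [SeminormedAddCommGroup X] (x y u v : X) :
    ‖x - y‖ - ‖u‖ - ‖v‖ ≤ ‖(x + u) - (y + v)‖ := by
  have h : x - y = ((x + u) - (y + v)) - (u - v) := by abel
  linarith [h ▸ norm_sub_le ((x + u) - (y + v)) (u - v), norm_sub_le u v]

theorem case_two_lower_estimate_general
    {E X : Type*} [NormedAddCommGroup E] [NormedSpace ℝ E]
    [NormedAddCommGroup X] [NormedSpace ℝ X]
    (s : ℤ → E → X)
    (hs : ∀ (j : ℤ) (u v : E), ‖u - v‖ ≤ ‖s j u - s j v‖ ∧ ‖s j u - s j v‖ ≤ 2 * ‖u - v‖)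
    (hs0 : ∀ (j : ℤ) (u : E), ‖s j u‖ ≤ 2 * ‖u‖)
    (i : ℤ) (a b : E)
    (hb2 : ‖b‖ ≤ (2:ℝ)^i)
    (ha1 : (2:ℝ)^i ≤ ‖a‖) (ha2 : ‖a‖ ≤ (2:ℝ)^(i+1)) :
    ‖a - b‖ - 12 * (‖a‖ - ‖b‖) ≤
      ‖((((2:ℝ)^(i+1) - ‖a‖)/(2:ℝ)^i) • s (i+1) a + ((‖a‖ - (2:ℝ)^i)/(2:ℝ)^i) • s (i+2) a)
        - ((((2:ℝ)^i - ‖b‖)/(2:ℝ)^(i-1)) • s i b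
            + ((‖b‖ - (2:ℝ)^(i-1))/(2:ℝ)^(i-1)) • s (i+1) b)‖ := by
  have hc : (0:ℝ) < 2^i := by positivity
  have hc' : (0:ℝ) < 2^(i-1) := by positivity
  have hC : (2:ℝ)^(i+1) = 2 * 2^i := by rw [zpow_add_one₀ two_ne_zero, mul_comm]
  have hC' : (2:ℝ)^i = 2 * 2^(i-1) := by rw [← zpow_one_add₀ two_ne_zero]; ring_nf
  rw [smul_add_smul_eq_add_smul_sub_left (shell_weights_add_eq_one hc.ne' hC _),
    smul_add_smul_eq_add_smul_sub_right (shell_weights_add_eq_one hc'.ne' hC' _)]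
  have ha : ‖((‖a‖ - 2^i) / (2:ℝ)^i) • (s (i+2) a - s (i+1) a)‖ ≤ 8 * (‖a‖ - 2^i) :=
    norm_div_smul_sub_le hc (by linarith) (hC ▸ ha2) (hs0 _ _) (hs0 _ _)
  have hb : ‖((2^i - ‖b‖) / (2:ℝ)^(i-1)) • (s i b - s (i+1) b)‖ ≤ 8 * (2^i - ‖b‖) :=
    norm_div_smul_sub_le hc' (by linarith) (hC' ▸ hb2) (hs0 _ _) (hs0 _ _)
  linarith [(hs (i+1) a b).1, norm_sub_sub_le_norm_add_sub_add (s (i+1) a) (s (i+1) b)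
    (((‖a‖ - 2^i) / (2:ℝ)^i) • (s (i+2) a - s (i+1) a))
    (((2^i - ‖b‖) / (2:ℝ)^(i-1)) • (s i b - s (i+1) b))]

theorem case_two_lower_estimate
    {E X : Type*} [NormedAddCommGroup E] [NormedSpace ℝ E]
    [NormedAddCommGroup X] [NormedSpace ℝ X]
    (s : ℤ → E → X)
    (hs : ∀ (j : ℤ) (u v : E), ‖u - v‖ ≤ ‖s j u - s j v‖ ∧ ‖s j u - s j v‖ ≤ 2 * ‖u - v‖)
    (hs0 : ∀ (j : ℤ) (u : E), ‖s j u‖ ≤ 2 * ‖u‖)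
    (i : ℤ) (a b : E)
    (hb1 : (2:ℝ)^(i-1) ≤ ‖b‖) (hb2 : ‖b‖ ≤ (2:ℝ)^i)
    (ha1 : (2:ℝ)^i ≤ ‖a‖) (ha2 : ‖a‖ ≤ (2:ℝ)^(i+1)) :
    ‖a - b‖ - 12 * (‖a‖ - ‖b‖) ≤
      ‖((((2:ℝ)^(i+1) - ‖a‖)/(2:ℝ)^i) • s (i+1) a + ((‖a‖ - (2:ℝ)^i)/(2:ℝ)^i) • s (i+2) a)
        - ((((2:ℝ)^i - ‖b‖)/(2:ℝ)^(i-1)) • s i b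
            + ((‖b‖ - (2:ℝ)^(i-1))/(2:ℝ)^(i-1)) • s (i+1) b)‖ :=
  case_two_lower_estimate_general s hs hs0 i a b hb2 ha1 ha2
end

section
/- Case 2 upper estimate: under the hypotheses of the previous statement (2^{i−1} ≤ ‖b‖ ≤ 2^i ≤ ‖a‖ ≤ 2^{i+1}), ‖φ(a) − φ(b)‖ ≤ 5‖a−b‖ + 8(‖a‖ − ‖b‖) ≤ 13‖a − b‖. -/
/-!
Writing `φ(a) - φ(b)` as `(α • s_{i+1} a - β • s_{i+1} b) + (γ • s_{i+2} a - δ • s_i b)`, the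
first bracket is at most `α ‖s_{i+1} a - s_{i+1} b‖ + |α - β| ‖s_{i+1} b‖`; the weight difference
`α - β` is of order `(‖a‖ - ‖b‖) / 2^i` while `‖s_{i+1} b‖ ≤ 2^{i+1}`. The weights `γ`, `δ` vanish
on the common sphere `‖x‖ = 2^i`, so the second bracket is bounded by `4 (‖a‖ - 2^i) + 4 (2^i - ‖b‖)`.
-/

section

variable {E X : Type*} [NormedAddCommGroup E] [NormedAddCommGroup X] [NormedSpace ℝ X]

/-- On `2^i ≤ ‖x‖ ≤ 2^{i+1}` the interpolating map `φ` is `normInterp (2^i) s_{i+1} s_{i+2}`. -/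
noncomputable def normInterp (c : ℝ) (f g : E → X) (x : E) : X :=
  ((2 * c - ‖x‖) / c) • f x + ((‖x‖ - c) / c) • g x

lemma norm_smul_sub_smul_le (α β : ℝ) (x y : X) :
    ‖α • x - β • y‖ ≤ |α| * ‖x - y‖ + ‖(α - β) • y‖ := by
  calc ‖α • x - β • y‖ = ‖α • (x - y) + (α - β) • y‖ := by congr 1; module
    _ ≤ |α| * ‖x - y‖ + ‖(α - β) • y‖ := by
      simpa only [norm_smul, Real.norm_eq_abs] using norm_add_le (α • (x - y)) ((α - β) • y)

lemma norm_div_smul_le {c M : ℝ} (t : ℝ) {v : X} (hc : 0 < c) (hv : ‖v‖ ≤ M * c) :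
    ‖(t / c) • v‖ ≤ M * |t| := by
  rw [norm_smul, Real.norm_eq_abs, abs_div, abs_of_pos hc, div_mul_comm]
  gcongr
  rwa [div_le_iff₀ hc]

theorem norm_normInterp_sub_normInterp_le {f g h : E → X} {c : ℝ} {a b : E} (hc : 0 < c)
    (hg : ∀ u v, ‖g u - g v‖ ≤ 2 * ‖u - v‖) (hf0 : ∀ u, ‖f u‖ ≤ 2 * ‖u‖)
    (hg0 : ∀ u, ‖g u‖ ≤ 2 * ‖u‖) (hh0 : ∀ u, ‖h u‖ ≤ 2 * ‖u‖)
    (hb : ‖b‖ ≤ 2 * c) (ha1 : 2 * c ≤ ‖a‖) (ha2 : ‖a‖ ≤ 2 * (2 * c)) :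
    ‖normInterp (2 * c) g h a - normInterp c f g b‖ ≤ 2 * ‖a - b‖ + 8 * (‖a‖ - ‖b‖) := by
  have hc2 : 0 < 2 * c := by positivity
  set α := (2 * (2 * c) - ‖a‖) / (2 * c)
  set β := (‖b‖ - c) / c
  have hα : |α| ≤ 1 := by
    rw [abs_of_nonneg (div_nonneg (by linarith) hc2.le), div_le_one hc2]; linarith
  have hαβ : α - β = (6 * c - ‖a‖ - 2 * ‖b‖) / (2 * c) := by
    simp only [α, β]; field_simp; ring
  have hleading : ‖α • g a - β • g b‖ ≤ 2 * ‖a - b‖ + 4 * (‖a‖ - ‖b‖) := by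
    have hweights : |6 * c - ‖a‖ - 2 * ‖b‖| ≤ 2 * (‖a‖ - ‖b‖) :=
      abs_le.2 ⟨by linarith, by linarith⟩
    calc ‖α • g a - β • g b‖ ≤ |α| * ‖g a - g b‖ + ‖(α - β) • g b‖ :=
          norm_smul_sub_smul_le α β (g a) (g b)
      _ ≤ 1 * (2 * ‖a - b‖) + 2 * |6 * c - ‖a‖ - 2 * ‖b‖| := by
          gcongr
          · exact hg a b
          · rw [hαβ]; exact norm_div_smul_le _ hc2 (by linarith [hg0 b])
      _ ≤ 2 * ‖a - b‖ + 4 * (‖a‖ - ‖b‖) := by linarith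
  have hha : ‖((‖a‖ - 2 * c) / (2 * c)) • h a‖ ≤ 4 * (‖a‖ - 2 * c) := by
    simpa only [abs_of_nonneg (sub_nonneg.2 ha1)] using
      norm_div_smul_le (‖a‖ - 2 * c) hc2 (M := 4) (v := h a) (by linarith [hh0 a])
  have hfb : ‖((2 * c - ‖b‖) / c) • f b‖ ≤ 4 * (2 * c - ‖b‖) := by
    simpa only [abs_of_nonneg (sub_nonneg.2 hb)] using
      norm_div_smul_le (2 * c - ‖b‖) hc (M := 4) (v := f b) (by linarith [hf0 b])
  have hsplit : normInterp (2 * c) g h a - normInterp c f g b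
      = (α • g a - β • g b) + (((‖a‖ - 2 * c) / (2 * c)) • h a - ((2 * c - ‖b‖) / c) • f b) := by
    simp only [normInterp, α, β]; module
  rw [hsplit]
  calc _ ≤ (2 * ‖a - b‖ + 4 * (‖a‖ - ‖b‖)) + (4 * (‖a‖ - 2 * c) + 4 * (2 * c - ‖b‖)) :=
        norm_add_le_of_le hleading (norm_sub_le_of_le hha hfb)
    _ = 2 * ‖a - b‖ + 8 * (‖a‖ - ‖b‖) := by ring

end

theorem case_two_upper_estimate_general
    {E X : Type*} [NormedAddCommGroup E]
    [NormedAddCommGroup X] [NormedSpace ℝ X]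
    (s : ℤ → E → X)
    (hs : ∀ (j : ℤ) (u v : E), ‖u - v‖ ≤ ‖s j u - s j v‖ ∧ ‖s j u - s j v‖ ≤ 2 * ‖u - v‖)
    (hs0 : ∀ (j : ℤ) (u : E), ‖s j u‖ ≤ 2 * ‖u‖)
    (i : ℤ) (a b : E)
    (hb2 : ‖b‖ ≤ (2:ℝ)^i)
    (ha1 : (2:ℝ)^i ≤ ‖a‖) (ha2 : ‖a‖ ≤ (2:ℝ)^(i+1)) :
    ‖((((2:ℝ)^(i+1) - ‖a‖)/(2:ℝ)^i) • s (i+1) a + ((‖a‖ - (2:ℝ)^i)/(2:ℝ)^i) • s (i+2) a)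
        - ((((2:ℝ)^i - ‖b‖)/(2:ℝ)^(i-1)) • s i b
            + ((‖b‖ - (2:ℝ)^(i-1))/(2:ℝ)^(i-1)) • s (i+1) b)‖
      ≤ 5 * ‖a - b‖ + 8 * (‖a‖ - ‖b‖) ∧
    5 * ‖a - b‖ + 8 * (‖a‖ - ‖b‖) ≤ 13 * ‖a - b‖ := by
  have hpow_succ : (2:ℝ)^(i+1) = 2 * 2^i := by rw [zpow_add_one₀ two_ne_zero, mul_comm]
  have hpow_pred : (2:ℝ)^i = 2 * 2^(i-1) := by
    rw [← zpow_one_add₀ two_ne_zero, add_sub_cancel]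
  rw [hpow_succ, hpow_pred] at ha2 ⊢
  rw [hpow_pred] at hb2 ha1
  have hphi := norm_normInterp_sub_normInterp_le (zpow_pos two_pos (i-1))
    (fun u v => (hs (i+1) u v).2) (hs0 i) (hs0 (i+1)) (hs0 (i+2)) hb2 ha1 ha2
  have hnorms := norm_sub_norm_le a b
  have hnorms_nonneg : 0 ≤ ‖a‖ - ‖b‖ := by linarith
  refine ⟨?_, by linarith⟩
  unfold normInterp at hphi
  linarith [norm_nonneg (a - b)]

theorem case_two_upper_estimate
    {E X : Type*} [NormedAddCommGroup E] [NormedSpace ℝ E]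
    [NormedAddCommGroup X] [NormedSpace ℝ X]
    (s : ℤ → E → X)
    (hs : ∀ (j : ℤ) (u v : E), ‖u - v‖ ≤ ‖s j u - s j v‖ ∧ ‖s j u - s j v‖ ≤ 2 * ‖u - v‖)
    (hs0 : ∀ (j : ℤ) (u : E), ‖s j u‖ ≤ 2 * ‖u‖)
    (i : ℤ) (a b : E)
    (hb1 : (2:ℝ)^(i-1) ≤ ‖b‖) (hb2 : ‖b‖ ≤ (2:ℝ)^i)
    (ha1 : (2:ℝ)^i ≤ ‖a‖) (ha2 : ‖a‖ ≤ (2:ℝ)^(i+1)) :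
    ‖((((2:ℝ)^(i+1) - ‖a‖)/(2:ℝ)^i) • s (i+1) a + ((‖a‖ - (2:ℝ)^i)/(2:ℝ)^i) • s (i+2) a)
        - ((((2:ℝ)^i - ‖b‖)/(2:ℝ)^(i-1)) • s i b
            + ((‖b‖ - (2:ℝ)^(i-1))/(2:ℝ)^(i-1)) • s (i+1) b)‖
      ≤ 5 * ‖a - b‖ + 8 * (‖a‖ - ‖b‖) ∧
    5 * ‖a - b‖ + 8 * (‖a‖ - ‖b‖) ≤ 13 * ‖a - b‖ :=
  case_two_upper_estimate_general s hs hs0 i a b hb2 ha1 ha2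
end

section
/- Gluing lemma for bilipschitz maps with a norm coordinate: let N be a subset of a normed space, φ: N → X with constants L, c, K > 0 such that ‖φ(a)−φ(b)‖ ≤ L‖a−b‖ for all a,b, and for every a,b either ‖φ(a)−φ(b)‖ ≥ c‖a−b‖ − K(|‖a‖−‖b‖|) or |‖a‖−‖b‖| ≥ c′‖a−b‖ for some c′ > 0. Then the map ψ(a) = (φ(a), ‖a‖) into X ⊕_∞ ℝ is a bilipschitz embedding. -/
/-!
Write `ψ a = (φ a, ‖a‖)`, so that `‖ψ a - ψ b‖ = max ‖φ a - φ b‖ |‖a‖ - ‖b‖|`. The upper bound is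
the Lipschitz bound of `φ` together with `|‖a‖ - ‖b‖| ≤ ‖a - b‖`. For the lower bound, either the
norm difference is large, `K |‖a‖ - ‖b‖| > (c / 2) ‖a - b‖`, and the `ℝ` coordinate alone is
comparable to `‖a - b‖`, or it is small and the error term `K |‖a‖ - ‖b‖|` costs at most half of
`c ‖a - b‖` in the `X` coordinate.
-/

lemma min_mul_le_max_of_sub_mul_le {c K d x t : ℝ} (hK : 0 < K) (hd : 0 ≤ d)
    (h : c * d - K * t ≤ x) : min (c / 2) (c / (2 * K)) * d ≤ max x t := by
  by_cases hsmall : K * t ≤ c / 2 * d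
  · refine le_max_of_le_left ?_
    nlinarith [mul_le_mul_of_nonneg_right (min_le_left (c / 2) (c / (2 * K))) hd]
  · refine le_max_of_le_right ((mul_le_mul_of_nonneg_right (min_le_right _ _) hd).trans ?_)
    rw [div_mul_eq_mul_div, div_le_iff₀ (by positivity)]
    nlinarith

lemma min_mul_le_max_of_alternative {c K c' d x t : ℝ} (hK : 0 < K) (hd : 0 ≤ d)
    (h : c * d - K * t ≤ x ∨ c' * d ≤ t) :
    min (min (c / 2) (c / (2 * K))) c' * d ≤ max x t := by
  rcases h with hx | ht
  · exact (mul_le_mul_of_nonneg_right (min_le_left _ _) hd).trans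
      (min_mul_le_max_of_sub_mul_le hK hd hx)
  · exact le_max_of_le_right ((mul_le_mul_of_nonneg_right (min_le_right _ _) hd).trans ht)

theorem gluing_lemma_with_norm_coordinate_general
    {E X : Type*} [NormedAddCommGroup E]
    [NormedAddCommGroup X]
    (N : Set E) (φ : E → X) (L c K c' : ℝ)
    (hc : 0 < c) (hK : 0 < K) (hc' : 0 < c')
    (hlip : ∀ a ∈ N, ∀ b ∈ N, ‖φ a - φ b‖ ≤ L * ‖a - b‖)
    (halt : ∀ a ∈ N, ∀ b ∈ N,
      c * ‖a - b‖ - K * |‖a‖ - ‖b‖| ≤ ‖φ a - φ b‖ ∨ c' * ‖a - b‖ ≤ |‖a‖ - ‖b‖|) :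
    ∃ r C : ℝ, 0 < r ∧ 1 ≤ C ∧ ∀ a ∈ N, ∀ b ∈ N,
      r * ‖a - b‖ ≤ ‖((φ a, ‖a‖) : X × ℝ) - (φ b, ‖b‖)‖ ∧
      ‖((φ a, ‖a‖) : X × ℝ) - (φ b, ‖b‖)‖ ≤ r * C * ‖a - b‖ := by
  set r := min (min (c / 2) (c / (2 * K))) c'
  have hr : 0 < r := by positivity
  have hrC : max L 1 ≤ r * max (max L 1 / r) 1 :=
    calc max L 1 = r * (max L 1 / r) := by field_simp
      _ ≤ r * max (max L 1 / r) 1 := by gcongr; exact le_max_left _ _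
  refine ⟨r, max (max L 1 / r) 1, hr, le_max_right _ _, fun a ha b hb => ?_⟩
  rw [Prod.mk_sub_mk, Prod.norm_mk, Real.norm_eq_abs]
  have hd : 0 ≤ ‖a - b‖ := norm_nonneg _
  refine ⟨min_mul_le_max_of_alternative hK hd (halt a ha b hb), ?_⟩
  calc max ‖φ a - φ b‖ |‖a‖ - ‖b‖| ≤ max L 1 * ‖a - b‖ :=
        max_le ((hlip a ha b hb).trans (by gcongr; exact le_max_left _ _))
          ((abs_norm_sub_norm_le a b).trans (le_mul_of_one_le_left hd (le_max_right _ _)))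
    _ ≤ r * max (max L 1 / r) 1 * ‖a - b‖ := by gcongr

theorem gluing_lemma_with_norm_coordinate
    {E X : Type*} [NormedAddCommGroup E] [NormedSpace ℝ E]
    [NormedAddCommGroup X] [NormedSpace ℝ X]
    (N : Set E) (φ : E → X) (L c K c' : ℝ)
    (hL : 0 < L) (hc : 0 < c) (hK : 0 < K) (hc' : 0 < c')
    (hlip : ∀ a ∈ N, ∀ b ∈ N, ‖φ a - φ b‖ ≤ L * ‖a - b‖)
    (halt : ∀ a ∈ N, ∀ b ∈ N,
      c * ‖a - b‖ - K * |‖a‖ - ‖b‖| ≤ ‖φ a - φ b‖ ∨ c' * ‖a - b‖ ≤ |‖a‖ - ‖b‖|) :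
    ∃ r C : ℝ, 0 < r ∧ 1 ≤ C ∧ ∀ a ∈ N, ∀ b ∈ N,
      r * ‖a - b‖ ≤ ‖((φ a, ‖a‖) : X × ℝ) - (φ b, ‖b‖)‖ ∧
      ‖((φ a, ‖a‖) : X × ℝ) - (φ b, ‖b‖)‖ ≤ r * C * ‖a - b‖ :=
  gluing_lemma_with_norm_coordinate_general N φ L c K c' hc hK hc' hlip halt
end
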